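/- Let α, β, γ be linear maps on real sequences. The upper triangular matrix operator T(ω,x) = (αω + βx, γx) is bounded on Z₂ if and only if the following three conditions hold: (i) α and γ restrict to bounded operators on ℓ²; (ii) β − KP∘γ is bounded from ℓ_f to ℓ², i.e., there is a constant C with ‖βx − KP(γx)‖₂ ≤ C(‖KP x‖₂ + ‖x‖₂), and βx − KP(γx) ∈ ℓ², for every x ∈ ℓ² with KP x ∈ ℓ²; (iii) the map (ω,x) ↦ αω + βx − KP(γx) is bounded from Z₂ to ℓ², i.e., there is a constant C with αω + βx − KP(γx) ∈ ℓ² and ‖αω + βx − KP(γx)‖₂ ≤ C‖(ω,x)‖_{Z₂} for every (ω,x) ∈ Z₂. -/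

import Mathlib

open scoped BigOperators

noncomputable section

/-- Real sequences. -/
abbrev RSeq : Type := ℕ → ℝ

/-- Membership in ℓ². -/
def memL2 (x : RSeq) : Prop := Summable (fun n => (x n) ^ 2)

/-- The ℓ² norm. -/
noncomputable def l2norm (x : RSeq) : ℝ := Real.sqrt (∑' n, (x n) ^ 2)

/-- The Kalton–Peck map, defined coordinatewise.  (In Lean, `Real.log 0 = 0` and
division by zero is zero, so the conventions `0·log 0 = 0` and `KP 0 = 0` hold.) -/
noncomputable def KP (x : RSeq) : RSeq := fun n => 2 * x n * Real.log (|x n| / l2norm x)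

/-- Membership in the Kalton–Peck space Z₂. -/
def memZ2 (u : RSeq × RSeq) : Prop := memL2 u.2 ∧ memL2 (u.1 - KP u.2)

/-- The Z₂ quasinorm. -/
noncomputable def Z2norm (u : RSeq × RSeq) : ℝ := l2norm (u.1 - KP u.2) + l2norm u.2

/-- A map on pairs of sequences is bounded on Z₂. -/
def BoundedOnZ2 (T : RSeq × RSeq → RSeq × RSeq) : Prop :=
  (∀ u, memZ2 u → memZ2 (T u)) ∧ ∃ C : ℝ, ∀ u, memZ2 u → Z2norm (T u) ≤ C * Z2norm u

/-- The matrix operator associated to four linear maps on sequences. -/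
def matOp (α β δ γ : RSeq →ₗ[ℝ] RSeq) : RSeq × RSeq → RSeq × RSeq :=
  fun u => (α u.1 + β u.2, δ u.1 + γ u.2)

/-- Membership in the Orlicz space ℓ_f = Dom KP. -/
def memLf (x : RSeq) : Prop := memL2 x ∧ memL2 (KP x)

/-- The ℓ_f quasinorm. -/
noncomputable def lfNorm (x : RSeq) : ℝ := l2norm (KP x) + l2norm x

/-- Membership in ℓ_f* = Ran KP. -/
def memLfStar (ω : RSeq) : Prop := ∃ x : RSeq, memL2 x ∧ memL2 (ω - KP x)

/-- The ℓ_f* quasinorm. -/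
noncomputable def lfStarNorm (ω : RSeq) : ℝ :=
  sInf {r : ℝ | ∃ x : RSeq, memL2 x ∧ memL2 (ω - KP x) ∧ r = l2norm (ω - KP x) + l2norm x}

/-- A bounded map on Z₂ is strictly singular if every linear subspace of Z₂ on which it is
bounded below is finite dimensional. -/
def StrictlySingular (T : RSeq × RSeq → RSeq × RSeq) : Prop :=
  ∀ V : Submodule ℝ (RSeq × RSeq), (∀ v ∈ V, memZ2 v) →
    (∃ c > 0, ∀ v ∈ V, c * Z2norm v ≤ Z2norm (T v)) → FiniteDimensional ℝ V

/-- A set of sequences is totally bounded (relatively compact) for the ℓ² norm. -/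
def l2TotallyBounded (A : Set RSeq) : Prop :=
  ∀ ε > 0, ∃ S : Set RSeq, S.Finite ∧
    ∀ a ∈ A, ∃ s ∈ S, memL2 (a - s) ∧ l2norm (a - s) < ε

/-- A map on Z₂ is compact if the image of the unit ball is totally bounded for the
Z₂ quasinorm. -/
def CompactOnZ2 (T : RSeq × RSeq → RSeq × RSeq) : Prop :=
  ∀ ε > 0, ∃ S : Set (RSeq × RSeq), S.Finite ∧
    ∀ u, memZ2 u → Z2norm u ≤ 1 → ∃ s ∈ S, memZ2 (T u - s) ∧ Z2norm (T u - s) < ε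

/-! Since the Z₂ quasinorm of `(ω, x)` is `‖ω - KP x‖₂ + ‖x‖₂`, a map `T` is bounded on Z₂
exactly when both `u ↦ (T u).1 - KP (T u).2` and `u ↦ (T u).2` are bounded from Z₂ to ℓ².
For the upper triangular operator the first map is the one in (iii) and the second is `γ ∘ snd`.
Evaluating them on `(y, 0)`, `(KP y, y)` and `(0, x)`, whose Z₂ quasinorms are `‖y‖₂`, `‖y‖₂`
and `‖x‖_{ℓ_f}`, yields (i) and (ii); conversely, boundedness of `γ` on ℓ² together with (iii)
already gives boundedness of `T`. -/

def BoundedOnL2 (A : RSeq → RSeq) : Prop :=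
  ∃ C : ℝ, ∀ y : RSeq, memL2 y → memL2 (A y) ∧ l2norm (A y) ≤ C * l2norm y

def BoundedLfToL2 (S : RSeq → RSeq) : Prop :=
  ∃ C : ℝ, ∀ x : RSeq, memL2 x → memL2 (KP x) → memL2 (S x) ∧ l2norm (S x) ≤ C * lfNorm x

def BoundedZ2ToL2 (S : RSeq × RSeq → RSeq) : Prop :=
  ∃ C : ℝ, ∀ u : RSeq × RSeq, memZ2 u → memL2 (S u) ∧ l2norm (S u) ≤ C * Z2norm u

lemma l2norm_nonneg (x : RSeq) : 0 ≤ l2norm x := Real.sqrt_nonneg _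

lemma memL2_zero : memL2 0 := by
  simp [memL2]

lemma l2norm_zero : l2norm 0 = 0 := by
  simp [l2norm]

lemma memL2_neg {x : RSeq} (hx : memL2 x) : memL2 (-x) := by
  simpa [memL2] using hx

lemma l2norm_neg (x : RSeq) : l2norm (-x) = l2norm x := by
  simp [l2norm]

lemma KP_zero : KP 0 = 0 := by
  funext n
  simp [KP]

lemma l2norm_fst_sub_KP_snd_le_Z2norm (u : RSeq × RSeq) : l2norm (u.1 - KP u.2) ≤ Z2norm u :=
  le_add_of_nonneg_right (l2norm_nonneg _)

lemma l2norm_snd_le_Z2norm (u : RSeq × RSeq) : l2norm u.2 ≤ Z2norm u :=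
  le_add_of_nonneg_left (l2norm_nonneg _)

lemma memZ2_inl {y : RSeq} (hy : memL2 y) : memZ2 (y, 0) :=
  ⟨memL2_zero, by simpa [KP_zero] using hy⟩

lemma Z2norm_inl (y : RSeq) : Z2norm (y, 0) = l2norm y := by
  simp [Z2norm, KP_zero, l2norm_zero]

lemma memZ2_KP_self {y : RSeq} (hy : memL2 y) : memZ2 (KP y, y) :=
  ⟨hy, by simpa using memL2_zero⟩

lemma Z2norm_KP_self (y : RSeq) : Z2norm (KP y, y) = l2norm y := by
  simp [Z2norm, l2norm_zero]

lemma memZ2_inr {x : RSeq} (hx : memL2 x) (hKx : memL2 (KP x)) : memZ2 (0, x) :=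
  ⟨hx, by simpa using memL2_neg hKx⟩

lemma Z2norm_inr (x : RSeq) : Z2norm (0, x) = lfNorm x := by
  simp [Z2norm, lfNorm, l2norm_neg]

lemma boundedOnZ2_iff {T : RSeq × RSeq → RSeq × RSeq} :
    BoundedOnZ2 T ↔
      BoundedZ2ToL2 (fun u => (T u).1 - KP (T u).2) ∧ BoundedZ2ToL2 (fun u => (T u).2) := by
  constructor
  · rintro ⟨hmem, C, hC⟩
    exact ⟨⟨C, fun u hu => ⟨(hmem u hu).2,
        (l2norm_fst_sub_KP_snd_le_Z2norm (T u)).trans (hC u hu)⟩⟩,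
      ⟨C, fun u hu => ⟨(hmem u hu).1, (l2norm_snd_le_Z2norm (T u)).trans (hC u hu)⟩⟩⟩
  · rintro ⟨⟨C₁, h₁⟩, ⟨C₂, h₂⟩⟩
    refine ⟨fun u hu => ⟨(h₂ u hu).1, (h₁ u hu).1⟩, C₁ + C₂, fun u hu => ?_⟩
    rw [add_mul]
    exact add_le_add (h₁ u hu).2 (h₂ u hu).2

lemma BoundedOnL2.comp_snd {A : RSeq → RSeq} (hA : BoundedOnL2 A) :
    BoundedZ2ToL2 (fun u => A u.2) := by
  obtain ⟨C, hC⟩ := hA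
  refine ⟨max C 0, fun u hu => ⟨(hC u.2 hu.1).1, ?_⟩⟩
  calc l2norm (A u.2) ≤ C * l2norm u.2 := (hC u.2 hu.1).2
    _ ≤ max C 0 * l2norm u.2 := mul_le_mul_of_nonneg_right (le_max_left _ _) (l2norm_nonneg _)
    _ ≤ max C 0 * Z2norm u := mul_le_mul_of_nonneg_left (l2norm_snd_le_Z2norm u) (le_max_right _ _)

section restrictions

variable {S : RSeq × RSeq → RSeq} (hS : BoundedZ2ToL2 S)
include hS

lemma BoundedZ2ToL2.comp_inl : BoundedOnL2 (fun y => S (y, 0)) := by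
  obtain ⟨C, hC⟩ := hS
  refine ⟨C, fun y hy => ?_⟩
  simpa [Z2norm_inl] using hC (y, 0) (memZ2_inl hy)

lemma BoundedZ2ToL2.comp_KP_self : BoundedOnL2 (fun y => S (KP y, y)) := by
  obtain ⟨C, hC⟩ := hS
  refine ⟨C, fun y hy => ?_⟩
  simpa [Z2norm_KP_self] using hC (KP y, y) (memZ2_KP_self hy)

lemma BoundedZ2ToL2.comp_inr : BoundedLfToL2 (fun x => S (0, x)) := by
  obtain ⟨C, hC⟩ := hS
  refine ⟨C, fun x hx hKx => ?_⟩
  simpa [Z2norm_inr] using hC (0, x) (memZ2_inr hx hKx)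

end restrictions

/-- The upper triangular operator T(ω,x) = (αω + βx, γx) is bounded on Z₂
if and only if α and γ restrict to bounded operators on ℓ², β − KP∘γ is bounded from
ℓ_f to ℓ², and (ω,x) ↦ αω + βx − KP(γx) is bounded from Z₂ to ℓ². -/
theorem stmt_11 (α β γ : RSeq →ₗ[ℝ] RSeq) :
    BoundedOnZ2 (fun u : RSeq × RSeq => (α u.1 + β u.2, γ u.2)) ↔
      ((∃ C : ℝ, ∀ y : RSeq, memL2 y → memL2 (α y) ∧ l2norm (α y) ≤ C * l2norm y) ∧
       (∃ C : ℝ, ∀ y : RSeq, memL2 y → memL2 (γ y) ∧ l2norm (γ y) ≤ C * l2norm y)) ∧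
      (∃ C : ℝ, ∀ x : RSeq, memL2 x → memL2 (KP x) →
        memL2 (β x - KP (γ x)) ∧
        l2norm (β x - KP (γ x)) ≤ C * (l2norm (KP x) + l2norm x)) ∧
      (∃ C : ℝ, ∀ u : RSeq × RSeq, memZ2 u →
        memL2 (α u.1 + β u.2 - KP (γ u.2)) ∧
        l2norm (α u.1 + β u.2 - KP (γ u.2)) ≤ C * Z2norm u) := by
  rw [boundedOnZ2_iff]
  constructor
  · rintro ⟨hfst, hsnd⟩
    refine ⟨⟨?_, hsnd.comp_KP_self⟩, ?_, hfst⟩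
    · simpa [BoundedOnL2, KP_zero] using hfst.comp_inl
    · simpa [BoundedLfToL2, lfNorm] using hfst.comp_inr
  · rintro ⟨⟨-, hγ⟩, -, hfst⟩
    exact ⟨hfst, BoundedOnL2.comp_snd (A := γ) hγ⟩
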